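/- arXiv:2309.12997 — 3 statements merged into one kernel-verified Lean document; each statement's English description precedes it below -/
import Mathlib

section
/- Let ρ_i = N(μ_i, σ²) for i = 1,…,N with distinct means, and ρ_θ = Σ_i p_i ρ_i with p_i > 0 summing to 1 fixed. Then for each pair i, j: lim_{σ→0} ∫_ℝ ρ_i(x) ρ_j(x) / ρ_θ(x) dx = δ_{ij} / p_i, where δ_{ij} is the Kronecker delta. -/
/-!
Write `S = ∑ k, p k * ρ k`. Since `S ≥ p a * ρ a` and `S ^ 2 ≥ p a * p b * ρ a * ρ b`, the
integrand `ρ a * ρ b / S` is dominated both by `ρ b / p a` and by `√(ρ a * ρ b) / √(p a * p b)`.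
The integral of the latter is the Bhattacharyya coefficient of two Gaussians,
`exp (-(μ a - μ b) ^ 2 / (8 σ ^ 2))`, which tends to `0` as `σ → 0⁺`: this gives the
off-diagonal limits. On the diagonal, `∑ k, p k * ∫ ρ i * ρ k / S = ∫ ρ i = 1`, so
`p i * ∫ ρ i ^ 2 / S` tends to `1`.
-/

open MeasureTheory Real Filter

/-- The density of the Gaussian with mean `m` and standard deviation `σ`. -/
noncomputable def gaussPDF (m σ x : ℝ) : ℝ :=
  (1 / (Real.sqrt (2 * Real.pi) * σ)) * Real.exp (-(x - m) ^ 2 / (2 * σ ^ 2))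

open Topology

lemma mul_div_le_div_of_mul_le {u v s a : ℝ} (ha : 0 < a) (hu : 0 < u) (hv : 0 ≤ v)
    (has : a * u ≤ s) : u * v / s ≤ v / a :=
  calc u * v / s ≤ u * v / (a * u) :=
        div_le_div_of_nonneg_left (mul_nonneg hu.le hv) (mul_pos ha hu) has
    _ = v / a := by field_simp

lemma mul_div_le_sqrt_div_sqrt {u v s a b : ℝ} (ha : 0 < a) (hb : 0 < b) (hu : 0 < u)
    (hv : 0 < v) (has : a * u ≤ s) (hbs : b * v ≤ s) : u * v / s ≤ √(u * v) / √(a * b) := by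
  have huv : 0 < u * v := mul_pos hu hv
  have hs : √(a * b) * √(u * v) ≤ s := by
    have hs0 : 0 ≤ s := (mul_pos ha hu).le.trans has
    rw [← Real.sqrt_mul (mul_pos ha hb).le, ← Real.sqrt_mul_self hs0]
    exact Real.sqrt_le_sqrt (by nlinarith [mul_le_mul has hbs (mul_pos hb hv).le hs0])
  calc u * v / s ≤ u * v / (√(a * b) * √(u * v)) :=
        div_le_div_of_nonneg_left huv.le (by positivity) hs
    _ = √(u * v) / √(a * b) := by
      nth_rw 1 [← Real.mul_self_sqrt huv.le]
      field_simp

lemma MeasureTheory.Integrable.sqrt_mul {α : Type*} [MeasurableSpace α] {ν : Measure α}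
    {u v : α → ℝ} (hu : Integrable u ν) (hv : Integrable v ν) :
    Integrable (fun x => √(u x * v x)) ν := by
  refine (hu.norm.add hv.norm).mono
    (continuous_sqrt.comp_aestronglyMeasurable (hu.1.mul hv.1))
    (Eventually.of_forall fun x => ?_)
  simp only [Pi.add_apply, Real.norm_eq_abs]
  rw [abs_of_nonneg (Real.sqrt_nonneg _), abs_of_nonneg (by positivity)]
  refine Real.sqrt_le_iff.mpr ⟨by positivity, ?_⟩
  nlinarith [abs_nonneg (u x), abs_nonneg (v x), le_abs_self (u x * v x), abs_mul (u x) (v x)]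

section Mixture

variable {ι α : Type*} [Fintype ι] {p : ι → ℝ}

lemma mul_le_mixture {f : ι → α → ℝ} (hp : ∀ k, 0 < p k) (hf : ∀ k x, 0 < f k x)
    (a : ι) (x : α) :
    p a * f a x ≤ ∑ k, p k * f k x :=
  Finset.single_le_sum (fun k _ => (mul_pos (hp k) (hf k x)).le) (Finset.mem_univ a)

lemma mixture_pos {f : ι → α → ℝ} (hp : ∀ k, 0 < p k) (hf : ∀ k x, 0 < f k x)
    (a : ι) (x : α) :
    0 < ∑ k, p k * f k x :=
  (mul_pos (hp a) (hf a x)).trans_le (mul_le_mixture hp hf a x)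

variable [MeasurableSpace α] {ν : Measure α}

noncomputable def mixtureOverlap (ν : Measure α) (p : ι → ℝ) (f : ι → α → ℝ) (i j : ι) :
    ℝ :=
  ∫ x, f i x * f j x / (∑ k, p k * f k x) ∂ν

section

variable {f : ι → α → ℝ}

lemma integrable_mul_div_mixture (hp : ∀ k, 0 < p k) (hf : ∀ k x, 0 < f k x)
    (hint : ∀ k, Integrable (f k) ν) (a b : ι) :
    Integrable (fun x => f a x * f b x / ∑ k, p k * f k x) ν := by
  have hmix : Integrable (fun x => ∑ k, p k * f k x) ν :=
    integrable_finsetSum _ fun k _ => (hint k).const_mul (p k)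
  have hmeas : AEStronglyMeasurable (fun x => f a x * f b x / ∑ k, p k * f k x) ν :=
    (((hint a).1.mul (hint b).1).aemeasurable.div hmix.1.aemeasurable).aestronglyMeasurable
  refine ((hint b).div_const (p a)).mono hmeas (Eventually.of_forall fun x => ?_)
  rw [norm_of_nonneg (div_nonneg (mul_pos (hf a x) (hf b x)).le (mixture_pos hp hf a x).le),
    norm_of_nonneg (div_nonneg (hf b x).le (hp a).le)]
  exact mul_div_le_div_of_mul_le (hp a) (hf a x) (hf b x).le (mul_le_mixture hp hf a x)

lemma mixtureOverlap_nonneg (hp : ∀ k, 0 < p k) (hf : ∀ k x, 0 < f k x) (a b : ι) :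
    0 ≤ mixtureOverlap ν p f a b :=
  integral_nonneg fun x => div_nonneg (mul_pos (hf a x) (hf b x)).le (mixture_pos hp hf a x).le

lemma sum_mul_mixtureOverlap (hp : ∀ k, 0 < p k) (hf : ∀ k x, 0 < f k x)
    (hint : ∀ k, Integrable (f k) ν) (a : ι) :
    ∑ k, p k * mixtureOverlap ν p f a k = ∫ x, f a x ∂ν := by
  simp only [mixtureOverlap, ← integral_const_mul]
  rw [← integral_finsetSum _ fun k _ => (integrable_mul_div_mixture hp hf hint a k).const_mul _]
  refine integral_congr_ae (Eventually.of_forall fun x => ?_)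
  have hS := (mixture_pos hp hf a x).ne'
  calc ∑ k, p k * (f a x * f k x / ∑ k, p k * f k x)
      = f a x * (∑ k, p k * f k x) / ∑ k, p k * f k x := by
        rw [Finset.mul_sum, Finset.sum_div]
        exact Finset.sum_congr rfl fun k _ => by ring
    _ = f a x := mul_div_cancel_right₀ _ hS

lemma mixtureOverlap_le (hp : ∀ k, 0 < p k) (hf : ∀ k x, 0 < f k x)
    (hint : ∀ k, Integrable (f k) ν) (a b : ι) :
    mixtureOverlap ν p f a b ≤ (∫ x, √(f a x * f b x) ∂ν) / √(p a * p b) := by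
  rw [← integral_div]
  exact integral_mono (integrable_mul_div_mixture hp hf hint a b)
    (((hint a).sqrt_mul (hint b)).div_const _) fun x => mul_div_le_sqrt_div_sqrt (hp a) (hp b)
      (hf a x) (hf b x) (mul_le_mixture hp hf a x) (mul_le_mixture hp hf b x)

end

variable {β : Type*} {l : Filter β} {f : β → ι → α → ℝ}

theorem tendsto_mixtureOverlap_zero (hp : ∀ k, 0 < p k) (hf : ∀ᶠ t in l, ∀ k x, 0 < f t k x)
    (hint : ∀ᶠ t in l, ∀ k, Integrable (f t k) ν) {a b : ι}
    (hab : Tendsto (fun t => ∫ x, √(f t a x * f t b x) ∂ν) l (𝓝 0)) :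
    Tendsto (fun t => mixtureOverlap ν p (f t) a b) l (𝓝 0) := by
  refine tendsto_of_tendsto_of_tendsto_of_le_of_le' tendsto_const_nhds
    (by simpa using hab.div_const √(p a * p b)) ?_ ?_
  · filter_upwards [hf] with t hft using mixtureOverlap_nonneg hp hft a b
  · filter_upwards [hf, hint] with t hft hintt using mixtureOverlap_le hp hft hintt a b

theorem tendsto_mixtureOverlap_self [DecidableEq ι] (hp : ∀ k, 0 < p k)
    (hf : ∀ᶠ t in l, ∀ k x, 0 < f t k x) (hint : ∀ᶠ t in l, ∀ k, Integrable (f t k) ν) {a : ι}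
    (ha : ∀ᶠ t in l, ∫ x, f t a x ∂ν = 1)
    (hsep : ∀ b ≠ a, Tendsto (fun t => mixtureOverlap ν p (f t) a b) l (𝓝 0)) :
    Tendsto (fun t => mixtureOverlap ν p (f t) a a) l (𝓝 (1 / p a)) := by
  have hrest : Tendsto (fun t => ∑ k ∈ Finset.univ.erase a, p k * mixtureOverlap ν p (f t) a k)
      l (𝓝 0) := by
    simpa only [mul_zero, Finset.sum_const_zero] using tendsto_finsetSum _
      fun k hk => (hsep k (Finset.ne_of_mem_erase hk)).const_mul (p k)
  have hlim : Tendsto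
      (fun t => (1 - ∑ k ∈ Finset.univ.erase a, p k * mixtureOverlap ν p (f t) a k) / p a)
      l (𝓝 (1 / p a)) := by
    simpa only [sub_zero] using (tendsto_const_nhds.sub hrest).div_const (p a)
  refine hlim.congr' ?_
  filter_upwards [hf, hint, ha] with t hft hintt hat
  rw [div_eq_iff (hp a).ne', ← hat, ← sum_mul_mixtureOverlap hp hft hintt a,
    ← Finset.add_sum_erase _ _ (Finset.mem_univ a)]
  ring

theorem tendsto_mixtureOverlap [DecidableEq ι] (hp : ∀ k, 0 < p k)
    (hf : ∀ᶠ t in l, ∀ k x, 0 < f t k x) (hint : ∀ᶠ t in l, ∀ k, Integrable (f t k) ν)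
    (hone : ∀ᶠ t in l, ∀ k, ∫ x, f t k x ∂ν = 1)
    (hsep : Pairwise fun a b => Tendsto (fun t => ∫ x, √(f t a x * f t b x) ∂ν) l (𝓝 0))
    (i j : ι) :
    Tendsto (fun t => mixtureOverlap ν p (f t) i j) l (𝓝 (if i = j then 1 / p i else 0)) := by
  have hzero : ∀ a b, a ≠ b → Tendsto (fun t => mixtureOverlap ν p (f t) a b) l (𝓝 0) :=
    fun a b hab => tendsto_mixtureOverlap_zero hp hf hint (hsep hab)
  split_ifs with hij
  · subst hij
    exact tendsto_mixtureOverlap_self hp hf hint (hone.mono fun t h => h i)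
      fun b hb => hzero i b hb.symm
  · exact hzero i j hij

end Mixture

lemma gaussPDF_pos (m : ℝ) {σ : ℝ} (hσ : 0 < σ) (x : ℝ) : 0 < gaussPDF m σ x := by
  unfold gaussPDF
  positivity

lemma gaussPDF_eq_gaussianPDFReal (m : ℝ) {σ : ℝ} (hσ : 0 < σ) :
    gaussPDF m σ = ProbabilityTheory.gaussianPDFReal m (σ ^ 2).toNNReal := by
  ext x
  simp only [gaussPDF, ProbabilityTheory.gaussianPDFReal, Real.coe_toNNReal _ (sq_nonneg σ),
    Real.sqrt_mul (by positivity : (0 : ℝ) ≤ 2 * π), Real.sqrt_sq hσ.le, one_div]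

lemma integrable_gaussPDF (m : ℝ) {σ : ℝ} (hσ : 0 < σ) : Integrable (gaussPDF m σ) := by
  rw [gaussPDF_eq_gaussianPDFReal m hσ]
  exact ProbabilityTheory.integrable_gaussianPDFReal m _

lemma integral_gaussPDF (m : ℝ) {σ : ℝ} (hσ : 0 < σ) : ∫ x, gaussPDF m σ x = 1 := by
  rw [gaussPDF_eq_gaussianPDFReal m hσ]
  exact ProbabilityTheory.integral_gaussianPDFReal_eq_one m
    (Real.toNNReal_pos.2 (by positivity)).ne'

lemma gaussPDF_mul_gaussPDF (a b : ℝ) {σ : ℝ} (hσ : σ ≠ 0) (x : ℝ) :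
    gaussPDF a σ x * gaussPDF b σ x
      = (exp (-(a - b) ^ 2 / (8 * σ ^ 2)) * gaussPDF ((a + b) / 2) σ x) ^ 2 := by
  have hexp : -(x - a) ^ 2 / (2 * σ ^ 2) + -(x - b) ^ 2 / (2 * σ ^ 2)
      = (-(a - b) ^ 2 / (8 * σ ^ 2) + -(x - (a + b) / 2) ^ 2 / (2 * σ ^ 2))
        + (-(a - b) ^ 2 / (8 * σ ^ 2) + -(x - (a + b) / 2) ^ 2 / (2 * σ ^ 2)) := by
    field_simp
    ring
  simp only [gaussPDF]
  calc _ = (1 / (√(2 * π) * σ)) ^ 2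
        * exp (-(x - a) ^ 2 / (2 * σ ^ 2) + -(x - b) ^ 2 / (2 * σ ^ 2)) := by
        rw [exp_add]; ring
    _ = _ := by rw [hexp, exp_add, exp_add]; ring

lemma integral_sqrt_gaussPDF_mul_gaussPDF (a b : ℝ) {σ : ℝ} (hσ : 0 < σ) :
    ∫ x, √(gaussPDF a σ x * gaussPDF b σ x) = exp (-(a - b) ^ 2 / (8 * σ ^ 2)) := by
  simp_rw [gaussPDF_mul_gaussPDF a b hσ.ne', Real.sqrt_sq
    (mul_pos (exp_pos _) (gaussPDF_pos _ hσ _)).le]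
  rw [integral_const_mul, integral_gaussPDF _ hσ, mul_one]

lemma tendsto_exp_neg_div_sq {c : ℝ} (hc : 0 < c) :
    Tendsto (fun σ : ℝ => exp (-c / σ ^ 2)) (𝓝[>] 0) (𝓝 0) := by
  have hsq : Tendsto (fun σ : ℝ => σ ^ 2) (𝓝[>] 0) (𝓝[>] 0) :=
    tendsto_nhdsWithin_of_tendsto_nhds_of_eventually_within _
      ((continuous_pow 2).tendsto' 0 0 (by simp) |>.mono_left nhdsWithin_le_nhds)
      (eventually_nhdsWithin_of_forall fun σ hσ => Set.mem_Ioi.2 (pow_pos hσ 2))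
  refine (tendsto_exp_neg_atTop_nhds_zero.comp
    ((tendsto_inv_nhdsGT_zero.comp hsq).const_mul_atTop hc)).congr fun σ => ?_
  simp [div_eq_mul_inv]

lemma tendsto_integral_sqrt_gaussPDF_mul_gaussPDF {a b : ℝ} (hab : a ≠ b) :
    Tendsto (fun σ => ∫ x, √(gaussPDF a σ x * gaussPDF b σ x)) (𝓝[>] 0) (𝓝 0) := by
  have hd : 0 < (a - b) ^ 2 / 8 := by have := sub_ne_zero.2 hab; positivity
  refine (tendsto_exp_neg_div_sq hd).congr' ?_
  filter_upwards [self_mem_nhdsWithin] with σ hσ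
  rw [integral_sqrt_gaussPDF_mul_gaussPDF a b hσ, neg_div, neg_div, div_div]

theorem mixture_overlap_limit_general (N : ℕ) (μ : Fin N → ℝ) (hμ : StrictMono μ)
    (p : Fin N → ℝ) (hp : ∀ i, 0 < p i) (i j : Fin N) :
    Tendsto
      (fun σ : ℝ => ∫ x : ℝ,
        gaussPDF (μ i) σ x * gaussPDF (μ j) σ x / (∑ k, p k * gaussPDF (μ k) σ x))
      (nhdsWithin 0 (Set.Ioi 0))
      (nhds (if i = j then 1 / p i else 0)) := by
  have hσ : ∀ᶠ σ in 𝓝[>] (0 : ℝ), 0 < σ := self_mem_nhdsWithin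
  exact tendsto_mixtureOverlap (ν := volume) (f := fun σ k => gaussPDF (μ k) σ) hp
    (hσ.mono fun σ hσ k x => gaussPDF_pos _ hσ x)
    (hσ.mono fun σ hσ k => integrable_gaussPDF _ hσ)
    (hσ.mono fun σ hσ k => integral_gaussPDF _ hσ)
    (fun a b hab => tendsto_integral_sqrt_gaussPDF_mul_gaussPDF (hμ.injective.ne hab)) i j

theorem mixture_overlap_limit (N : ℕ) (μ : Fin N → ℝ) (hμ : StrictMono μ)
    (p : Fin N → ℝ) (hp : ∀ i, 0 < p i) (hsum : ∑ i, p i = 1) (i j : Fin N) :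
    Tendsto
      (fun σ : ℝ => ∫ x : ℝ,
        gaussPDF (μ i) σ x * gaussPDF (μ j) σ x / (∑ k, p k * gaussPDF (μ k) σ x))
      (nhdsWithin 0 (Set.Ioi 0))
      (nhds (if i = j then 1 / p i else 0)) :=
  mixture_overlap_limit_general N μ hμ p hp i j
end

section
/- Fix p, q > 0, d > 0, k > 0, σ > 0. The equation p·(1/(√(2π)σ)) e^{-l²/(2σ²)} = q·(1/(√(2π)kσ)) e^{-(d-l)²/(2k²σ²)} in the unknown l ∈ (0, d) has a unique solution whenever σ is sufficiently small, and this solution satisfies l = d/(k+1) + (kσ²/d) log(kp/q) + o(σ²) as σ → 0. -/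
/-!
Taking logarithms, the matching condition at scale `σ` becomes
`k²l² - (d - l)² = 2k²σ² log (kp/q)`. The left side is strictly increasing on `[0, d]`, running
from `-d²` to `k²d²`, so once the right side `s` lies strictly between these values there is
exactly one root in `(0, d)`, given by the quadratic formula as a function `l(s)` of `s`.
Since `l(0) = d/(k+1)` and, by the inverse function rule, `l'(0) = 1/(2dk)`, substituting
`s = 2k²σ² log (kp/q)` gives the expansion.
-/

open Real Filter Asymptotics Set Topology

theorem mul_exp_eq_mul_exp_iff {A B u v : ℝ} (hA : 0 < A) (hB : 0 < B) :
    A * exp u = B * exp v ↔ u - v = log (B / A) := by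
  rw [← exp_eq_exp (x := u - v), exp_log (div_pos hB hA), exp_sub,
    div_eq_div_iff (exp_pos v).ne' hA.ne', mul_comm (exp u)]

def matchingQuad (k d x : ℝ) : ℝ := k ^ 2 * x ^ 2 - (d - x) ^ 2

theorem gaussian_matching_iff {p q d k σ : ℝ} (hp : 0 < p) (hq : 0 < q) (hk : 0 < k)
    (hσ : 0 < σ) (x : ℝ) :
    p * (1 / (√(2 * π) * σ)) * exp (-x ^ 2 / (2 * σ ^ 2))
        = q * (1 / (√(2 * π) * (k * σ))) * exp (-(d - x) ^ 2 / (2 * (k * σ) ^ 2)) ↔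
      matchingQuad k d x = 2 * k ^ 2 * log (k * p / q) * σ ^ 2 := by
  have hπ : 0 < √(2 * π) := by positivity
  have hratio : q * (1 / (√(2 * π) * (k * σ))) / (p * (1 / (√(2 * π) * σ))) = (k * p / q)⁻¹ := by
    field_simp
  have hexponent : -x ^ 2 / (2 * σ ^ 2) - -(d - x) ^ 2 / (2 * (k * σ) ^ 2)
      = -(matchingQuad k d x / (2 * k ^ 2 * σ ^ 2)) := by
    rw [matchingQuad]; field_simp; ring
  rw [mul_exp_eq_mul_exp_iff (by positivity) (by positivity), hratio, log_inv, hexponent, neg_inj,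
    div_eq_iff (by positivity)]
  ring_nf

theorem strictMonoOn_matchingQuad (k d : ℝ) : StrictMonoOn (matchingQuad k d) (Icc 0 d) := by
  intro x hx y hy hxy
  have h₁ : k ^ 2 * x ^ 2 ≤ k ^ 2 * y ^ 2 := by gcongr; exact hx.1
  have h₂ : (d - y) ^ 2 < (d - x) ^ 2 := by gcongr; linarith [hy.2]
  simp only [matchingQuad]; linarith

theorem hasDerivAt_matchingQuad (k d x : ℝ) :
    HasDerivAt (matchingQuad k d) (2 * k ^ 2 * x + 2 * (d - x)) x := by
  have h := ((hasDerivAt_pow 2 x).const_mul (k ^ 2)).sub (((hasDerivAt_id' x).const_sub d).pow 2)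
  exact h.congr_deriv (by ring)

/-- The root of `(k² - 1)x² + 2dx - (d² + s) = 0` with rationalized numerator, so that the
formula stays valid at `k = 1`. -/
noncomputable def matchingRoot (k d s : ℝ) : ℝ :=
  (d ^ 2 + s) / (d + √(k ^ 2 * d ^ 2 + (k ^ 2 - 1) * s))

section
variable {k d s : ℝ}

theorem matchingRoot_radicand_pos (hs₀ : -d ^ 2 < s) (hs₁ : s < k ^ 2 * d ^ 2) :
    0 < k ^ 2 * d ^ 2 + (k ^ 2 - 1) * s := by
  rcases le_or_gt s 0 with hs | hs <;> nlinarith [sq_nonneg k]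

theorem matchingQuad_matchingRoot (hd : 0 < d) (hs₀ : -d ^ 2 < s) (hs₁ : s < k ^ 2 * d ^ 2) :
    matchingQuad k d (matchingRoot k d s) = s := by
  have hsq := sq_sqrt (matchingRoot_radicand_pos hs₀ hs₁).le
  have ht := sqrt_nonneg (k ^ 2 * d ^ 2 + (k ^ 2 - 1) * s)
  rw [matchingQuad, matchingRoot]
  generalize √(k ^ 2 * d ^ 2 + (k ^ 2 - 1) * s) = t at hsq ht ⊢
  have hD : d + t ≠ 0 := by positivity
  field_simp
  linear_combination (-(d ^ 2 + s)) * hsq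

theorem matchingRoot_mem_Ioo (hd : 0 < d) (hs₀ : -d ^ 2 < s) (hs₁ : s < k ^ 2 * d ^ 2) :
    matchingRoot k d s ∈ Ioo 0 d := by
  have hR := matchingRoot_radicand_pos hs₀ hs₁
  have hsq := sq_sqrt hR.le
  have ht := sqrt_pos.2 hR
  rw [matchingRoot]
  generalize √(k ^ 2 * d ^ 2 + (k ^ 2 - 1) * s) = t at hsq ht ⊢
  -- `(d t)² - s² = (k²d² - s)(d² + s) > 0`
  have hs : s < d * t := by
    by_contra! h
    nlinarith [mul_self_le_mul_self (by positivity) h]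
  constructor
  · exact div_pos (by linarith) (by positivity)
  · rw [div_lt_iff₀ (by positivity)]; linarith

theorem matchingQuad_eq_iff_eq_matchingRoot (hd : 0 < d) (hs₀ : -d ^ 2 < s)
    (hs₁ : s < k ^ 2 * d ^ 2) {x : ℝ} (hx : x ∈ Icc 0 d) :
    matchingQuad k d x = s ↔ x = matchingRoot k d s := by
  have hroot := matchingQuad_matchingRoot hd hs₀ hs₁
  refine ⟨fun h => (strictMonoOn_matchingQuad k d).injOn hx ?_ (h.trans hroot.symm), ?_⟩
  · exact Ioo_subset_Icc_self (matchingRoot_mem_Ioo hd hs₀ hs₁)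
  · rintro rfl; exact hroot

end

theorem matchingRoot_zero {k d : ℝ} (hd : 0 < d) (hk : 0 ≤ k) : matchingRoot k d 0 = d / (k + 1) := by
  rw [matchingRoot, mul_zero, add_zero, add_zero, ← mul_pow, sqrt_sq (by positivity)]
  field_simp
  ring

theorem hasDerivAt_matchingRoot {k d : ℝ} (hd : 0 < d) (hk : 0 < k) :
    HasDerivAt (matchingRoot k d) (2 * d * k)⁻¹ 0 := by
  have hD : d + √(k ^ 2 * d ^ 2 + (k ^ 2 - 1) * 0) ≠ 0 := by positivity
  refine HasDerivAt.of_local_left_inverse ?_ ((hasDerivAt_matchingQuad k d _).congr_deriv ?_)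
    (by positivity) ?_
  · exact ContinuousAt.div (by fun_prop) (by fun_prop) hD
  · rw [matchingRoot_zero hd hk.le]; field_simp; ring
  · filter_upwards [Ioo_mem_nhds (by nlinarith : -d ^ 2 < 0) (by positivity : (0:ℝ) < k ^ 2 * d ^ 2)]
      with s hs using matchingQuad_matchingRoot hd hs.1 hs.2

theorem HasDerivAt.isLittleO_comp_const_mul_sq {f : ℝ → ℝ} {f' : ℝ} (hf : HasDerivAt f f' 0)
    (c : ℝ) : (fun x => f (c * x ^ 2) - (f 0 + c * f' * x ^ 2)) =o[𝓝 0] (fun x => x ^ 2) := by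
  have h := hf.isLittleO.comp_tendsto ((by fun_prop : Continuous fun x : ℝ => c * x ^ 2).tendsto' 0 0 (by simp))
  simp only [Function.comp_def, sub_zero, smul_eq_mul] at h
  exact (h.trans_isBigO ((isBigO_refl _ _).const_mul_left c)).congr_left fun x => by ring

theorem gaussian_matching_condition (p q d k : ℝ) (hp : 0 < p) (hq : 0 < q)
    (hd : 0 < d) (hk : 0 < k) :
    ∃ σ₀ > (0 : ℝ), ∃ l : ℝ → ℝ,
      (∀ σ : ℝ, 0 < σ → σ < σ₀ →
        l σ ∈ Set.Ioo 0 d ∧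
        p * (1 / (Real.sqrt (2 * Real.pi) * σ)) * Real.exp (-(l σ) ^ 2 / (2 * σ ^ 2))
          = q * (1 / (Real.sqrt (2 * Real.pi) * (k * σ))) *
              Real.exp (-(d - l σ) ^ 2 / (2 * (k * σ) ^ 2)) ∧
        ∀ l' ∈ Set.Ioo (0 : ℝ) d,
          p * (1 / (Real.sqrt (2 * Real.pi) * σ)) * Real.exp (-l' ^ 2 / (2 * σ ^ 2))
            = q * (1 / (Real.sqrt (2 * Real.pi) * (k * σ))) *
                Real.exp (-(d - l') ^ 2 / (2 * (k * σ) ^ 2)) → l' = l σ) ∧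
      (fun σ : ℝ => l σ - (d / (k + 1) + (k * σ ^ 2 / d) * Real.log (k * p / q)))
        =o[nhdsWithin 0 (Set.Ioi 0)] (fun σ : ℝ => σ ^ 2) := by
  set c := 2 * k ^ 2 * log (k * p / q)
  have hsmall : ∀ᶠ σ in 𝓝[>] 0, c * σ ^ 2 ∈ Ioo (-d ^ 2) (k ^ 2 * d ^ 2) :=
    (((by fun_prop : Continuous fun σ : ℝ => c * σ ^ 2).tendsto' 0 0 (by simp)).mono_left
      nhdsWithin_le_nhds).eventually (Ioo_mem_nhds (by nlinarith) (by positivity))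
  obtain ⟨σ₀, hσ₀, hsub⟩ := mem_nhdsGT_iff_exists_Ioo_subset.1 hsmall
  refine ⟨σ₀, hσ₀, fun σ => matchingRoot k d (c * σ ^ 2), fun σ hσ hσσ₀ => ?_, ?_⟩
  · obtain ⟨hs₀, hs₁⟩ := hsub ⟨hσ, hσσ₀⟩
    simp only [gaussian_matching_iff hp hq hk hσ]
    refine ⟨matchingRoot_mem_Ioo hd hs₀ hs₁, matchingQuad_matchingRoot hd hs₀ hs₁, fun l' hl' => ?_⟩
    exact (matchingQuad_eq_iff_eq_matchingRoot hd hs₀ hs₁ (Ioo_subset_Icc_self hl')).1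
  · refine (((hasDerivAt_matchingRoot hd hk).isLittleO_comp_const_mul_sq c).mono
      nhdsWithin_le_nhds).congr_left fun σ => ?_
    rw [matchingRoot_zero hd hk.le]
    field_simp
    ring
end

section
/- Along any solution in the open simplex of the discrete entropy gradient flow ṗ_i = -√(p_i p_{i-1}) log(p_i/p_{i-1}) + √(p_i p_{i+1}) log(p_{i+1}/p_i), the discrete entropy H(p) = Σ_i p_i log p_i is non-increasing: dH/dt = -Σ_{i=1}^{N-1} √(p_i p_{i+1}) (log(p_{i+1}/p_i))² ≤ 0. -/
/-!
The right-hand side of the flow is the net inflow `J i - J (i - 1)` of the flux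
`J j = √(p j p (j+1)) log (p (j+1) / p j)`, with no flux through the ends, and
`d/dx (x log x) = log x + 1`. Summing by parts turns `dH/dt` into
`-∑ J j (log p (j+1) - log p j) = -∑ √(p j p (j+1)) log (p (j+1) / p j)²`.
-/

open Real Finset

/-- The net inflow into site `i` of the path `1, …, N` when `J j` is the flux from site `j + 1`
to site `j`; the boundary sites have no outer neighbour. -/
def fluxBalance (N : ℕ) (J : ℕ → ℝ) (i : ℕ) : ℝ :=
  -(if 2 ≤ i then J (i - 1) else 0) + (if i + 1 ≤ N then J i else 0)

lemma sum_Icc_ite_succ_le (N : ℕ) (g : ℕ → ℝ) :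
    ∑ i ∈ Icc 1 N, (if i + 1 ≤ N then g i else 0) = ∑ i ∈ Icc 1 (N - 1), g i := by
  rw [sum_ite, sum_const_zero, add_zero]
  congr 1
  ext i
  simp only [mem_filter, mem_Icc]
  omega

lemma sum_Icc_ite_two_le (N : ℕ) (g : ℕ → ℝ) :
    ∑ i ∈ Icc 1 N, (if 2 ≤ i then g (i - 1) else 0) = ∑ i ∈ Icc 1 (N - 1), g i := by
  rw [sum_ite, sum_const_zero, add_zero]
  refine sum_nbij' (· - 1) (· + 1) ?_ ?_ ?_ ?_ fun _ _ => rfl <;> intro i hi <;>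
    simp only [mem_filter, mem_Icc] at hi ⊢ <;> omega

theorem sum_fluxBalance_mul (N : ℕ) (J f : ℕ → ℝ) :
    ∑ i ∈ Icc 1 N, fluxBalance N J i * f i = -∑ i ∈ Icc 1 (N - 1), J i * (f (i + 1) - f i) := by
  have hsplit : ∀ i, fluxBalance N J i * f i =
      -(if 2 ≤ i then J (i - 1) * f (i - 1 + 1) else 0) + (if i + 1 ≤ N then J i * f i else 0) := by
    intro i
    unfold fluxBalance
    by_cases h : 2 ≤ i
    · rw [Nat.sub_add_cancel (by omega : 1 ≤ i)]
      split_ifs <;> ring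
    · split_ifs <;> ring
  simp only [hsplit, sum_add_distrib, sum_neg_distrib, sum_Icc_ite_succ_le,
    sum_Icc_ite_two_le (g := fun j => J j * f (j + 1)), mul_sub, sum_sub_distrib]
  ring

noncomputable def entropyFlux (q : ℕ → ℝ) (j : ℕ) : ℝ :=
  √(q j * q (j + 1)) * log (q (j + 1) / q j)

lemma fluxBalance_entropyFlux (N : ℕ) (q : ℕ → ℝ) (i : ℕ) :
    fluxBalance N (entropyFlux q) i =
      -(if 2 ≤ i then √(q i * q (i - 1)) * log (q i / q (i - 1)) else 0)
        + (if i + 1 ≤ N then √(q i * q (i + 1)) * log (q (i + 1) / q i) else 0) := by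
  unfold fluxBalance entropyFlux
  by_cases h : 2 ≤ i
  · rw [if_pos h, if_pos h, Nat.sub_add_cancel (by omega : 1 ≤ i), mul_comm (q (i - 1))]
  · rw [if_neg h, if_neg h]

lemma entropyFlux_mul_log_sub {q : ℕ → ℝ} {j : ℕ} (hj : 0 < q j) (hj' : 0 < q (j + 1)) :
    entropyFlux q j * ((log (q (j + 1)) + 1) - (log (q j) + 1)) =
      √(q j * q (j + 1)) * log (q (j + 1) / q j) ^ 2 := by
  rw [entropyFlux, log_div hj'.ne' hj.ne']
  ring

lemma HasDerivAt.mul_log {x : ℝ → ℝ} {x' t : ℝ} (hx : HasDerivAt x x' t) (ht : x t ≠ 0) :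
    HasDerivAt (fun s => x s * Real.log (x s)) (x' * (Real.log (x t) + 1)) t :=
  ((hasDerivAt_mul_log ht).comp t hx).congr_deriv (mul_comm _ _)

theorem entropy_flow_dissipation_general (N : ℕ) (p : ℝ → ℕ → ℝ)
    (hpos : ∀ t, ∀ i ∈ Finset.Icc 1 N, 0 < p t i)
    (hode : ∀ t, ∀ i ∈ Finset.Icc 1 N,
      HasDerivAt (fun s => p s i)
        (-(if 2 ≤ i then
            Real.sqrt (p t i * p t (i - 1)) * Real.log (p t i / p t (i - 1)) else 0)
          + (if i + 1 ≤ N then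
            Real.sqrt (p t i * p t (i + 1)) * Real.log (p t (i + 1) / p t i) else 0)) t) :
    ∀ t,
      HasDerivAt (fun s => ∑ i ∈ Finset.Icc 1 N, p s i * Real.log (p s i))
        (-∑ i ∈ Finset.Icc 1 (N - 1),
          Real.sqrt (p t i * p t (i + 1)) * (Real.log (p t (i + 1) / p t i)) ^ 2) t ∧
      -∑ i ∈ Finset.Icc 1 (N - 1),
          Real.sqrt (p t i * p t (i + 1)) * (Real.log (p t (i + 1) / p t i)) ^ 2 ≤ 0 := by
  intro t
  refine ⟨?_, neg_nonpos.mpr (sum_nonneg fun i _ => by positivity)⟩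
  have hterm : ∀ i ∈ Icc 1 N, HasDerivAt (fun s => p s i * log (p s i))
      (fluxBalance N (entropyFlux (p t)) i * (log (p t i) + 1)) t := fun i hi => by
    rw [fluxBalance_entropyFlux]
    exact (hode t i hi).mul_log (hpos t i hi).ne'
  refine (HasDerivAt.fun_sum hterm).congr_deriv ?_
  rw [sum_fluxBalance_mul N (entropyFlux (p t)) fun i => log (p t i) + 1]
  refine congrArg Neg.neg (sum_congr rfl fun i hi => ?_)
  obtain ⟨hi1, hiN⟩ := mem_Icc.mp hi
  exact entropyFlux_mul_log_sub (hpos t i (mem_Icc.mpr ⟨hi1, by omega⟩))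
    (hpos t (i + 1) (mem_Icc.mpr ⟨by omega, by omega⟩))

/-- Along any solution in the open simplex of the discrete entropy gradient flow,
the discrete entropy `H(p) = ∑ p_i log p_i` is non-increasing:
`dH/dt = -∑_{i=1}^{N-1} √(p_i p_{i+1}) (log(p_{i+1}/p_i))² ≤ 0`. -/
theorem entropy_flow_dissipation (N : ℕ) (hN : 2 ≤ N) (p : ℝ → ℕ → ℝ)
    (hpos : ∀ t, ∀ i ∈ Finset.Icc 1 N, 0 < p t i)
    (hsum : ∀ t, ∑ i ∈ Finset.Icc 1 N, p t i = 1)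
    (hode : ∀ t, ∀ i ∈ Finset.Icc 1 N,
      HasDerivAt (fun s => p s i)
        (-(if 2 ≤ i then
            Real.sqrt (p t i * p t (i - 1)) * Real.log (p t i / p t (i - 1)) else 0)
          + (if i + 1 ≤ N then
            Real.sqrt (p t i * p t (i + 1)) * Real.log (p t (i + 1) / p t i) else 0)) t) :
    ∀ t,
      HasDerivAt (fun s => ∑ i ∈ Finset.Icc 1 N, p s i * Real.log (p s i))
        (-∑ i ∈ Finset.Icc 1 (N - 1),
          Real.sqrt (p t i * p t (i + 1)) * (Real.log (p t (i + 1) / p t i)) ^ 2) t ∧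
      -∑ i ∈ Finset.Icc 1 (N - 1),
          Real.sqrt (p t i * p t (i + 1)) * (Real.log (p t (i + 1) / p t i)) ^ 2 ≤ 0 :=
  entropy_flow_dissipation_general N p hpos hode
end
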